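/- arXiv:1105.5357 — 6 statements merged into one kernel-verified Lean document; each statement's English description precedes it below -/
import Mathlib

section
/- Let R be a commutative ring in which 2 is invertible, and let M be a finite free R-module with a quadratic form Q admitting an orthogonal basis e_1,…,e_m (the polar form of Q vanishes on pairs of distinct basis vectors) such that each Q(e_i) is a unit of R. For every nonempty subset {i_1 < i_2 < … < i_j} of {1,…,m}, the trace of the R-linear endomorphism of the Clifford algebra Cliff(Q) given by left multiplication by the product ι(e_{i_1})·ι(e_{i_2})⋯ι(e_{i_j}) equals 0, while the trace of left multiplication by 1 equals 2^m. -/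
/-!
Write `L x` for left multiplication by `x` on `Cliff(Q)`. Since `tr (L (a b)) = tr (L (b a))`
and `tr ∘ L` is invariant under algebra automorphisms, `tr (L x) = 0` whenever some
automorphism sends `x` to `-x` (as `2` is invertible). For a product of an odd number of
`ι (e i)` this automorphism is the grade involution. For an even number, write the product as
`ι (e k) * y` with `y` a product of an odd number of `ι (e i)`, `i ≠ k`; then `ι (e k)`
anticommutes with it and is invertible because `Q (e k)` is, so conjugation by `ι (e k)` works.
The trace of `L 1` is the rank `2 ^ m`, read off the basis transported from the exterior
algebra.
-/

open LinearMap CliffordAlgebra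

theorem eq_zero_of_eq_neg_of_invertible_two {R : Type*} [CommRing R] [Invertible (2 : R)]
    {a : R} (h : a = -a) : a = 0 :=
  (isUnit_of_invertible (2 : R)).mul_right_eq_zero.mp (by linear_combination h)

namespace LinearMap

variable {R A : Type*} [CommRing R] [Ring A] [Algebra R A]

theorem trace_mulLeft_neg (x : A) :
    trace R A (mulLeft R (-x)) = -trace R A (mulLeft R x) := by
  rw [← map_neg]
  congr 1
  ext y
  simp

theorem trace_mulLeft_mul_comm (a b : A) :
    trace R A (mulLeft R (a * b)) = trace R A (mulLeft R (b * a)) := by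
  rw [mulLeft_mul, mulLeft_mul, ← Module.End.mul_eq_comp, ← Module.End.mul_eq_comp,
    trace_mul_comm]

theorem trace_mulLeft_algEquiv (σ : A ≃ₐ[R] A) (x : A) :
    trace R A (mulLeft R (σ x)) = trace R A (mulLeft R x) := by
  have : mulLeft R (σ x) = σ.toLinearEquiv.conj (mulLeft R x) := by
    ext y
    simp [LinearEquiv.conj_apply]
  rw [this, trace_conj']

variable [Invertible (2 : R)]

theorem trace_mulLeft_eq_zero_of_algEquiv_eq_neg (σ : A ≃ₐ[R] A) {x : A} (h : σ x = -x) :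
    trace R A (mulLeft R x) = 0 :=
  eq_zero_of_eq_neg_of_invertible_two <| by
    rw [← trace_mulLeft_neg, ← h, trace_mulLeft_algEquiv]

theorem trace_mulLeft_eq_zero_of_mul_eq_neg_mul (u : Aˣ) {x : A} (h : u * x = -(x * u)) :
    trace R A (mulLeft R x) = 0 :=
  eq_zero_of_eq_neg_of_invertible_two <| by
    calc trace R A (mulLeft R x) = trace R A (mulLeft R (↑u⁻¹ * (u * x))) := by
          rw [Units.inv_mul_cancel_left]
      _ = trace R A (mulLeft R (u * x * ↑u⁻¹)) := trace_mulLeft_mul_comm _ _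
      _ = -trace R A (mulLeft R x) := by
          rw [h, neg_mul, Units.mul_inv_cancel_right, trace_mulLeft_neg]

end LinearMap

namespace CliffordAlgebra

variable {R M : Type*} [CommRing R] [AddCommGroup M] [Module R M] {Q : QuadraticForm R M}

theorem prod_map_ι_mul_ι_of_isOrtho {v : M} :
    ∀ {l : List M}, (∀ w ∈ l, Q.IsOrtho v w) →
      (l.map (ι Q)).prod * ι Q v = (-1 : R) ^ l.length • (ι Q v * (l.map (ι Q)).prod)
  | [], _ => by simp
  | w :: l, h => by
    rw [List.map_cons, List.prod_cons, mul_assoc,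
      prod_map_ι_mul_ι_of_isOrtho fun w' hw' => h w' (List.mem_cons_of_mem w hw'),
      mul_smul_comm, ← mul_assoc, ι_mul_ι_comm_of_isOrtho (h w List.mem_cons_self).symm,
      List.length_cons, pow_succ, neg_mul, mul_assoc]
    module

variable [Invertible (2 : R)]

theorem trace_mulLeft_prod_map_ι_of_odd {l : List M} (hl : Odd l.length) :
    trace R (CliffordAlgebra Q) (mulLeft R (l.map (ι Q)).prod) = 0 :=
  trace_mulLeft_eq_zero_of_algEquiv_eq_neg involuteEquiv <| by
    rw [involuteEquiv_apply, involute_prod_map_ι, hl.neg_one_pow, neg_one_smul]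

theorem trace_mulLeft_ι_mul_prod_map_ι_of_isOrtho {v : M} (hv : IsUnit (Q v)) {l : List M}
    (hl : ∀ w ∈ l, Q.IsOrtho v w) (hodd : Odd l.length) :
    trace R (CliffordAlgebra Q) (mulLeft R (ι Q v * (l.map (ι Q)).prod)) = 0 :=
  trace_mulLeft_eq_zero_of_mul_eq_neg_mul (isUnit_ι_of_isUnit Q hv).unit <| by
    rw [IsUnit.unit_spec, mul_assoc _ _ (ι Q v), prod_map_ι_mul_ι_of_isOrtho hl,
      hodd.neg_one_pow, neg_one_smul, mul_neg, neg_neg]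

theorem trace_mulLeft_one {I : Type*} [Fintype I] [LinearOrder I] (b : Module.Basis I R M) :
    trace R (CliffordAlgebra Q) (mulLeft R 1) = 2 ^ Fintype.card I := by
  rw [mulLeft_one, trace_eq_matrix_trace R (b.ExteriorAlgebra.map (equivExterior Q).symm),
    toMatrix_id, Matrix.trace_one, Fintype.card_finset, Nat.cast_pow, Nat.cast_ofNat]

end CliffordAlgebra

/-- Let `R` be a commutative ring with `2` invertible and `M` a finite free
`R`-module with a quadratic form `Q` admitting an orthogonal basis `e : Fin m → M` whose values
`Q (e i)` are units.  For every nonempty subset `S` of `{1,…,m}`, the trace of left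
multiplication on the Clifford algebra by the product `ι(e_{i₁}) ⋯ ι(e_{i_j})`
(indices in increasing order) is `0`, while the trace of left multiplication by `1` is `2^m`. -/
theorem clifford_trace_of_basis_products
    {R : Type*} [CommRing R] [Invertible (2 : R)]
    {M : Type*} [AddCommGroup M] [Module R M]
    {m : ℕ} (e : Module.Basis (Fin m) R M) (Q : QuadraticForm R M)
    (horth : ∀ i j : Fin m, i ≠ j → QuadraticMap.polar Q (e i) (e j) = 0)
    (hunit : ∀ i : Fin m, IsUnit (Q (e i))) :
    (∀ S : Finset (Fin m), S.Nonempty →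
      LinearMap.trace R (CliffordAlgebra Q)
        (LinearMap.mulLeft R
          (((S.sort (· ≤ ·)).map (fun i => CliffordAlgebra.ι Q (e i))).prod)) = 0) ∧
    LinearMap.trace R (CliffordAlgebra Q)
      (LinearMap.mulLeft R (1 : CliffordAlgebra Q)) = 2 ^ m := by
  refine ⟨fun S hS => ?_, by simpa using trace_mulLeft_one (Q := Q) e⟩
  have hlen := S.length_sort (· ≤ ·)
  have hmap (l : List (Fin m)) : l.map (fun i => ι Q (e i)) = (l.map e).map (ι Q) := by simp
  rcases Nat.even_or_odd S.card with heven | hodd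
  · obtain ⟨k, t, hkt⟩ :=
      List.exists_cons_of_ne_nil (List.ne_nil_of_length_pos (hlen ▸ hS.card_pos))
    have hk : k ∉ t := (List.nodup_cons.mp (hkt ▸ S.sort_nodup (· ≤ ·))).1
    rw [hkt, List.length_cons] at hlen
    rw [hkt, List.map_cons, List.prod_cons, hmap]
    refine trace_mulLeft_ι_mul_prod_map_ι_of_isOrtho (hunit k) ?_ ?_
    · simp only [List.mem_map]
      rintro _ ⟨j, hj, rfl⟩
      exact QuadraticMap.isOrtho_polarBilin.mp (horth k j (ne_of_mem_of_not_mem hj hk).symm)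
    · rwa [← hlen, Nat.even_add_one, Nat.not_even_iff_odd, ← List.length_map e] at heven
  · rw [hmap]
    exact trace_mulLeft_prod_map_ι_of_odd (by simpa [hlen] using hodd)
end

section
/- Let R be a commutative Noetherian ring, I ⊆ R an ideal, and s ∈ R a prime element which is not a zero divisor and whose image in R/I is not a unit. Then for every n ≥ 1 the quotient R/(s^n) is separated for the I-adic topology; equivalently, if x ∈ R satisfies x ∈ I^k + (s^n) for every k ≥ 0, then x ∈ (s^n). -/
/-!
By Krull's intersection theorem applied to the finite `R`-module `R ⧸ (sⁿ)`, an element `x`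
lying in `I ^ k + (sⁿ)` for all `k` satisfies `(1 - r) x ∈ (sⁿ)` for some `r ∈ I`. Since `s` is
not a unit modulo `I`, the prime `s` does not divide `1 - r`, and as `s` is regular the whole
power `sⁿ` can then be moved onto `x`.
-/

theorem Prime.pow_dvd_of_dvd_mul_left_of_isLeftRegular {M : Type*} [CommMonoidWithZero M]
    {p a : M} (hp : Prime p) (hreg : IsLeftRegular p) (h : ¬p ∣ a) (n : ℕ) {b : M}
    (hab : p ^ n ∣ a * b) : p ^ n ∣ b := by
  induction n generalizing b with
  | zero => simp
  | succ n ih =>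
    obtain ⟨c, rfl⟩ := (hp.dvd_or_dvd ((dvd_pow_self p n.succ_ne_zero).trans hab)).resolve_left h
    have hac : p * p ^ n ∣ p * (a * c) := by
      rwa [← pow_succ', mul_left_comm]
    rw [pow_succ']
    exact mul_dvd_mul_left p (ih (hreg.dvd_cancel_left.mp hac))

theorem Ideal.exists_mem_one_sub_mul_mem_of_forall_mem_pow_add {R : Type*} [CommRing R]
    [IsNoetherianRing R] {I J : Ideal R} {x : R} (hx : ∀ k : ℕ, x ∈ I ^ k + J) :
    ∃ r ∈ I, (1 - r) * x ∈ J := by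
  have hmem : J.mkQ x ∈ (⨅ k : ℕ, I ^ k • ⊤ : Submodule R (R ⧸ J)) := by
    refine Submodule.mem_iInf _ |>.mpr fun k ↦ ?_
    -- `I ^ k • ⊤` is the image of `I ^ k` in `R ⧸ J`, whose preimage is `I ^ k ⊔ J`
    rw [← J.range_mkQ, LinearMap.range_eq_map, ← Submodule.map_smul'', Ideal.smul_eq_mul,
      Ideal.mul_top, ← Submodule.mem_comap, Submodule.comap_map_mkQ, sup_comm]
    exact hx k
  obtain ⟨⟨r, hr⟩, hrx⟩ := (I.mem_iInf_smul_pow_eq_bot_iff _).mp hmem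
  refine ⟨r, hr, (Submodule.Quotient.mk_eq_zero J).mp ?_⟩
  rw [sub_mul, one_mul, Submodule.Quotient.mk_sub, ← smul_eq_mul, Submodule.Quotient.mk_smul]
  exact sub_eq_zero.mpr hrx.symm

theorem Ideal.Quotient.isUnit_mk_of_dvd_one_sub {R : Type*} [CommRing R] {I : Ideal R}
    {r s : R} (hr : r ∈ I) (hs : s ∣ 1 - r) : IsUnit (Ideal.Quotient.mk I s) :=
  isUnit_of_dvd_one <| by
    simpa [Ideal.Quotient.eq_zero_iff_mem.mpr hr] using map_dvd (Ideal.Quotient.mk I) hs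

/-- Let `R` be a commutative Noetherian ring, `I ⊆ R` an ideal and `s ∈ R`
a prime element which is not a zero divisor and whose image in `R/I` is not a unit.  Then for
every `n ≥ 1` the quotient `R/(sⁿ)` is separated for the `I`-adic topology: if
`x ∈ I^k + (sⁿ)` for every `k`, then `x ∈ (sⁿ)`. -/
theorem quotient_by_prime_power_is_I_adically_separated
    {R : Type*} [CommRing R] [IsNoetherianRing R]
    (I : Ideal R) (s : R) (hs : Prime s) (hnzd : s ∈ nonZeroDivisors R)
    (hu : ¬ IsUnit (Ideal.Quotient.mk I s)) :
    ∀ n : ℕ, 1 ≤ n → ∀ x : R,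
      (∀ k : ℕ, x ∈ I ^ k + Ideal.span {s ^ n}) → x ∈ Ideal.span {s ^ n} := by
  intro n _ x hx
  obtain ⟨r, hrI, hrx⟩ := Ideal.exists_mem_one_sub_mul_mem_of_forall_mem_pow_add hx
  have hreg : IsLeftRegular s := (isRegular_iff_mem_nonZeroDivisors.mpr hnzd).left
  have hsr : ¬s ∣ 1 - r := fun h ↦ hu (Ideal.Quotient.isUnit_mk_of_dvd_one_sub hrI h)
  rw [Ideal.mem_span_singleton] at hrx ⊢
  exact hs.pow_dvd_of_dvd_mul_left_of_isLeftRegular hreg hsr n hrx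
end

section
/- Let R be a commutative Noetherian ring, I ⊆ R an ideal, and s ∈ R a prime element which is not a zero divisor and whose image in R/I is not a unit. Let a ∈ R and n ≥ 0. If the image of a under the canonical ring homomorphism R → \hat{R} into the I-adic completion \hat{R} = lim_k R/I^k is divisible by s^n in \hat{R}, then s^n divides a in R. -/
/-!
Reducing the divisibility in `R̂` modulo `I ^ k` shows `a ∈ (sⁿ) + I ^ k` for every `k`. Krull's
intersection theorem for the finite module `R ⧸ (sⁿ)` then gives `r ∈ I` with
`sⁿ ∣ (1 - r) * a`. Since `s` is not a unit modulo `I`, `s ∤ 1 - r`, and as `s` is a prime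
non-zero-divisor this forces `sⁿ ∣ a`.
-/

open Ideal

theorem Prime.pow_dvd_of_dvd_mul_left_of_mem_nonZeroDivisors {R : Type*} [CommRing R]
    {p a b : R} (hp : Prime p) (hp₀ : p ∈ nonZeroDivisors R) (n : ℕ) (h : ¬p ∣ a)
    (h' : p ^ n ∣ a * b) : p ^ n ∣ b := by
  induction n with
  | zero => simp
  | succ n ih =>
    obtain ⟨c, rfl⟩ := ih (dvd_trans (pow_dvd_pow p n.le_succ) h')
    rw [pow_succ]
    apply mul_dvd_mul_left _ ((hp.dvd_or_dvd _).resolve_left h)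
    rwa [← dvd_cancel_left_mem_nonZeroDivisors (pow_mem hp₀ n), ← pow_succ, mul_left_comm]

theorem Ideal.Quotient.mk_dvd_mk_iff {R : Type*} [CommRing R] {J : Ideal R} {x a : R} :
    Quotient.mk J x ∣ Quotient.mk J a ↔ a ∈ span {x} ⊔ J := by
  rw [mem_span_singleton_sup]
  constructor
  · rintro ⟨t, ht⟩
    obtain ⟨c, rfl⟩ := Quotient.mk_surjective t
    refine ⟨c, a - c * x, ?_, by ring⟩
    rw [← Quotient.eq, map_mul, ht, mul_comm]
  · rintro ⟨c, b, hb, rfl⟩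
    refine ⟨Quotient.mk J c, ?_⟩
    rw [map_add, Quotient.eq_zero_iff_mem.mpr hb, add_zero, map_mul, mul_comm]

theorem AdicCompletion.mem_span_singleton_sup_pow_of_algebraMap_dvd {R : Type*} [CommRing R]
    {I : Ideal R} {x a : R}
    (h : algebraMap R (AdicCompletion I R) x ∣ algebraMap R (AdicCompletion I R) a) (k : ℕ) :
    a ∈ span {x} ⊔ I ^ k := by
  have := map_dvd (evalₐ I k) h
  rwa [AlgHom.commutes, AlgHom.commutes, Quotient.algebraMap_eq, Quotient.mk_dvd_mk_iff] at this

theorem Ideal.exists_one_sub_mul_mem_of_forall_mem_sup_pow {R : Type*} [CommRing R]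
    [IsNoetherianRing R] {I J : Ideal R} {a : R} (h : ∀ k : ℕ, a ∈ J ⊔ I ^ k) :
    ∃ r ∈ I, (1 - r) * a ∈ J := by
  have hmem : Quotient.mk J a ∈ (⨅ k : ℕ, I ^ k • ⊤ : Submodule R (R ⧸ J)) := by
    simp only [Submodule.mem_iInf, smul_top_eq_map, Submodule.restrictScalars_mem,
      Quotient.algebraMap_eq, mem_quotient_iff_mem_sup]
    exact fun k => sup_comm J (I ^ k) ▸ h k
  obtain ⟨⟨r, hr⟩, hra⟩ := (mem_iInf_smul_pow_eq_bot_iff I _).mp hmem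
  refine ⟨r, hr, ?_⟩
  rw [Algebra.smul_def, Quotient.algebraMap_eq] at hra
  rw [← Quotient.eq_zero_iff_mem, sub_mul, one_mul, map_sub, map_mul, hra, sub_self]

theorem Ideal.not_dvd_one_sub_of_not_isUnit_mk {R : Type*} [CommRing R] {I : Ideal R} {s r : R}
    (hs : ¬IsUnit (Quotient.mk I s)) (hr : r ∈ I) : ¬s ∣ 1 - r := by
  rintro ⟨c, hc⟩
  refine hs (IsUnit.of_mul_eq_one (Quotient.mk I c) ?_)
  rw [← map_mul, ← hc, map_sub, map_one, Quotient.eq_zero_iff_mem.mpr hr, sub_zero]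

/-- Let `R` be a commutative Noetherian ring, `I ⊆ R` an ideal and `s ∈ R`
a prime element which is not a zero divisor and whose image in `R/I` is not a unit.  If the
image of `a ∈ R` in the `I`-adic completion `R̂` is divisible by `sⁿ` there, then `sⁿ`
already divides `a` in `R`. -/
theorem dvd_of_dvd_adicCompletion
    {R : Type*} [CommRing R] [IsNoetherianRing R]
    (I : Ideal R) (s : R) (hs : Prime s) (hnzd : s ∈ nonZeroDivisors R)
    (hu : ¬ IsUnit (Ideal.Quotient.mk I s))
    (a : R) (n : ℕ)
    (hdvd : (algebraMap R (AdicCompletion I R) s) ^ n ∣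
      algebraMap R (AdicCompletion I R) a) :
    s ^ n ∣ a := by
  rw [← map_pow] at hdvd
  obtain ⟨r, hr, hra⟩ := exists_one_sub_mul_mem_of_forall_mem_sup_pow
    (AdicCompletion.mem_span_singleton_sup_pow_of_algebraMap_dvd hdvd)
  exact hs.pow_dvd_of_dvd_mul_left_of_mem_nonZeroDivisors hnzd n
    (not_dvd_one_sub_of_not_isUnit_mk hu hr) (mem_span_singleton.mp hra)
end

section
/- Let p be a prime and N ≥ 1 an integer with p ∤ N, and let C be the matrix ((1 + N²/p, N/p), (N, 1)), an element of SL₂(ℚ). Then for every integer k ≥ 1 the trace of C^k is a nonzero rational number of p-adic valuation exactly −k; in particular C^k does not have p-integral entries, so C^k ∉ SL₂(ℤ) for all k ≥ 1. -/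
/-!
Write `C = p⁻¹ B` with `B = ((p + N², N), (pN, p))` integral, so that `det B = p²` and
`tr B = 2p + N²`. Modulo `p` the matrix `B` is singular, so Cayley–Hamilton gives
`B^k ≡ (tr B)^(k-1) B` and hence `tr B^k ≡ N^(2k) ≢ 0 (mod p)`. Therefore `tr C^k = p^(-k) tr B^k`
has valuation exactly `-k`; one diagonal entry of `C^k` then has negative valuation, while an
integral matrix has a trace of nonnegative valuation.
-/

namespace Matrix

section FinTwo

variable {R : Type*} [CommRing R]

theorem mul_self_eq_trace_smul_sub_det_smul (M : Matrix (Fin 2) (Fin 2) R) :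
    M * M = M.trace • M - M.det • 1 := by
  ext i j
  fin_cases i <;> fin_cases j <;> simp [mul_apply, trace_fin_two, det_fin_two] <;> ring

theorem pow_succ_eq_trace_pow_smul_of_det_eq_zero (M : Matrix (Fin 2) (Fin 2) R) (h : M.det = 0)
    (k : ℕ) : M ^ (k + 1) = M.trace ^ k • M := by
  induction k with
  | zero => simp
  | succ k ih =>
    rw [pow_succ, ih, smul_mul, mul_self_eq_trace_smul_sub_det_smul, h, zero_smul, sub_zero,
      smul_smul, pow_succ]

theorem trace_pow_succ_of_det_eq_zero (M : Matrix (Fin 2) (Fin 2) R) (h : M.det = 0) (k : ℕ) :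
    (M ^ (k + 1)).trace = M.trace ^ (k + 1) := by
  rw [pow_succ_eq_trace_pow_smul_of_det_eq_zero M h, trace_smul, smul_eq_mul, pow_succ]

end FinTwo

theorem not_dvd_trace_pow_succ_of_dvd_det {p : ℕ} [Fact p.Prime] (B : Matrix (Fin 2) (Fin 2) ℤ)
    (hdet : (p : ℤ) ∣ B.det) (htr : ¬ (p : ℤ) ∣ B.trace) (k : ℕ) :
    ¬ (p : ℤ) ∣ (B ^ (k + 1)).trace := by
  let f := (Int.castRingHom (ZMod p)).mapMatrix (m := Fin 2)
  have hf (A : Matrix (Fin 2) (Fin 2) ℤ) : ((A.trace : ℤ) : ZMod p) = (f A).trace :=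
    AddMonoidHom.map_trace (Int.castRingHom (ZMod p)) A
  have hdet' : (f B).det = 0 := by
    rw [← RingHom.map_det, eq_intCast, ZMod.intCast_zmod_eq_zero_iff_dvd]
    exact hdet
  simp only [← ZMod.intCast_zmod_eq_zero_iff_dvd, hf, map_pow] at htr ⊢
  rw [trace_pow_succ_of_det_eq_zero _ hdet']
  exact pow_ne_zero _ htr

theorem trace_map_intCast {n R : Type*} [Fintype n] [Ring R] (A : Matrix n n ℤ) :
    (A.map ((↑) : ℤ → R)).trace = A.trace := by
  simp [trace]

theorem trace_smul_map_intCast_pow {n R : Type*} [Fintype n] [DecidableEq n] [CommRing R] (c : R)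
    (B : Matrix n n ℤ) (k : ℕ) :
    ((c • B.map ((↑) : ℤ → R)) ^ k).trace = c ^ k * ((B ^ k).trace : R) := by
  rw [smul_pow, trace_smul, smul_eq_mul, ← trace_map_intCast]
  congr 2
  exact (map_pow (Int.castRingHom R).mapMatrix B k).symm

end Matrix

theorem padicValRat_inv_pow_mul_intCast {p : ℕ} [Fact p.Prime] (k : ℕ) {z : ℤ}
    (hz : ¬ (p : ℤ) ∣ z) : padicValRat p ((p : ℚ)⁻¹ ^ k * z) = -k := by
  have hp : (p : ℚ) ≠ 0 := by exact_mod_cast (Fact.out : p.Prime).ne_zero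
  have hz0 : (z : ℚ) ≠ 0 := by exact_mod_cast fun h : z = 0 => hz (h ▸ dvd_zero _)
  rw [padicValRat.mul (by positivity) hz0, padicValRat.pow, padicValRat.inv,
    padicValRat.self (Fact.out : p.Prime).one_lt, padicValRat.of_int,
    padicValInt.eq_zero_of_not_dvd hz]
  simp

namespace Matrix

theorem padicValRat_trace_inv_smul_pow_succ {p : ℕ} [Fact p.Prime] (B : Matrix (Fin 2) (Fin 2) ℤ)
    (hdet : (p : ℤ) ∣ B.det) (htr : ¬ (p : ℤ) ∣ B.trace) (k : ℕ) :
    (((p : ℚ)⁻¹ • B.map ((↑) : ℤ → ℚ)) ^ (k + 1)).trace ≠ 0 ∧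
      padicValRat p (((p : ℚ)⁻¹ • B.map ((↑) : ℤ → ℚ)) ^ (k + 1)).trace = -((k + 1 : ℕ) : ℤ) := by
  have hval :=
    padicValRat_inv_pow_mul_intCast (k + 1) (not_dvd_trace_pow_succ_of_dvd_det B hdet htr k)
  rw [← trace_smul_map_intCast_pow] at hval
  refine ⟨fun h => ?_, hval⟩
  rw [h, padicValRat.zero] at hval
  omega

theorem exists_padicValRat_apply_neg_of_padicValRat_trace_neg {p : ℕ} [Fact p.Prime]
    (M : Matrix (Fin 2) (Fin 2) ℚ) (h0 : M.trace ≠ 0) (hv : padicValRat p M.trace < 0) :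
    ∃ i j, M i j ≠ 0 ∧ padicValRat p (M i j) < 0 := by
  rw [trace_fin_two] at h0 hv
  rcases min_lt_iff.mp ((padicValRat.min_le_padicValRat_add h0).trans_lt hv) with h | h
  · exact ⟨0, 0, fun h' => by simp [h'] at h, h⟩
  · exact ⟨1, 1, fun h' => by simp [h'] at h, h⟩

end Matrix

theorem trace_pow_valuation_of_parabolic_product_general
    (p N : ℕ) (hp : p.Prime) (hpN : ¬ p ∣ N)
    (C : Matrix (Fin 2) (Fin 2) ℚ)
    (hC : C = !![1 + (N : ℚ) ^ 2 / (p : ℚ), (N : ℚ) / (p : ℚ); (N : ℚ), 1]) :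
    ∀ k : ℕ, 1 ≤ k →
      Matrix.trace (C ^ k) ≠ 0 ∧
      padicValRat p (Matrix.trace (C ^ k)) = -(k : ℤ) ∧
      (∃ i j : Fin 2, (C ^ k) i j ≠ 0 ∧ padicValRat p ((C ^ k) i j) < 0) ∧
      ¬ ∃ A : Matrix.SpecialLinearGroup (Fin 2) ℤ,
          (A : Matrix (Fin 2) (Fin 2) ℤ).map ((↑) : ℤ → ℚ) = C ^ k := by
  have : Fact p.Prime := ⟨hp⟩
  set B : Matrix (Fin 2) (Fin 2) ℤ := !![p + N ^ 2, N; p * N, p]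
  have hCB : C = (p : ℚ)⁻¹ • B.map (↑) := by
    have : (p : ℚ) ≠ 0 := by exact_mod_cast hp.ne_zero
    rw [hC]
    ext i j
    fin_cases i <;> fin_cases j <;> simp [B] <;> field_simp
  have hdet : (p : ℤ) ∣ B.det := ⟨p, by simp [B, Matrix.det_fin_two]; ring⟩
  have htr : ¬ (p : ℤ) ∣ B.trace := by
    rw [Matrix.trace_fin_two_of, add_right_comm, dvd_add_right (dvd_add dvd_rfl dvd_rfl)]
    exact fun h => hpN (Int.natCast_dvd_natCast.mp (Int.Prime.dvd_pow' hp h))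
  rintro k hk
  obtain ⟨m, rfl⟩ := Nat.exists_eq_add_of_le' hk
  obtain ⟨hne, hval⟩ := Matrix.padicValRat_trace_inv_smul_pow_succ B hdet htr m
  rw [← hCB] at hne hval
  have hneg : padicValRat p (C ^ (m + 1)).trace < 0 := by omega
  refine ⟨hne, hval, Matrix.exists_padicValRat_apply_neg_of_padicValRat_trace_neg _ hne hneg, ?_⟩
  rintro ⟨A, hA⟩
  rw [← hA, Matrix.trace_map_intCast, padicValRat.of_int] at hneg
  omega

/-- Let `p` be a prime not dividing `N ≥ 1`, and
`C = ((1 + N²/p, N/p), (N, 1)) ∈ SL₂(ℚ)`.  For every `k ≥ 1` the trace of `C^k` is a nonzero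
rational of `p`-adic valuation exactly `-k`; in particular `C^k` has a non-`p`-integral entry
and `C^k` is not (the image of) an element of `SL₂(ℤ)`. -/
theorem trace_pow_valuation_of_parabolic_product
    (p N : ℕ) (hp : p.Prime) (hN : 1 ≤ N) (hpN : ¬ p ∣ N)
    (C : Matrix (Fin 2) (Fin 2) ℚ)
    (hC : C = !![1 + (N : ℚ) ^ 2 / (p : ℚ), (N : ℚ) / (p : ℚ); (N : ℚ), 1]) :
    ∀ k : ℕ, 1 ≤ k →
      Matrix.trace (C ^ k) ≠ 0 ∧
      padicValRat p (Matrix.trace (C ^ k)) = -(k : ℤ) ∧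
      (∃ i j : Fin 2, (C ^ k) i j ≠ 0 ∧ padicValRat p ((C ^ k) i j) < 0) ∧
      ¬ ∃ A : Matrix.SpecialLinearGroup (Fin 2) ℤ,
          (A : Matrix (Fin 2) (Fin 2) ℤ).map ((↑) : ℤ → ℚ) = C ^ k :=
  trace_pow_valuation_of_parabolic_product_general p N hp hpN C hC
end

section
/- Let k be a field and n ≥ 1 an integer. For each index j ∈ {1,…,n}, let T_j be the substitution endomorphism of the formal power series ring k⟦z₁,…,z_n⟧ determined by z_j ↦ z_j and z_i ↦ z_i·z_j for all i ≠ j. Then for every nonzero formal power series f ∈ k⟦z₁,…,z_n⟧ there exist a finite sequence of indices j₁,…,j_r ∈ {1,…,n}, exponents a₁,…,a_n ∈ ℕ, and a power series g ∈ k⟦z₁,…,z_n⟧ with nonzero constant term, such that T_{j_r}(⋯(T_{j_1}(f))⋯) = z₁^{a₁}⋯z_n^{a_n}·g. -/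
/-- The substitution endomorphism `T_j` of `k⟦z₁,…,z_n⟧` determined by `z_j ↦ z_j` and
`z_i ↦ z_i·z_j` for `i ≠ j`, described coefficientwise: the monomial `z^d` is sent to the
monomial `z^d'` with `d'_i = d_i` for `i ≠ j` and `d'_j = ∑ᵢ d_i`, so the coefficient of
`T_j f` at an exponent `e` is the coefficient of `f` at the (unique) preimage exponent,
when it exists, and `0` otherwise. -/
noncomputable def substMulVar {k : Type*} [CommRing k] {n : ℕ} (j : Fin n)
    (f : MvPowerSeries (Fin n) k) : MvPowerSeries (Fin n) k :=
  fun e : Fin n →₀ ℕ =>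
    if (∑ i ∈ Finset.univ.erase j, e i) ≤ e j then
      MvPowerSeries.coeff
        (Finsupp.update e j (e j - ∑ i ∈ Finset.univ.erase j, e i)) f
    else 0

/-!
Write `|d| = ∑ᵢ dᵢ`. `T_j` acts on exponents by `d ↦ d'`, where `d'` agrees with `d` except that
`d'_j = |d|`; this map is monotone and `T_j f` has at `d'` the coefficient of `f` at `d`.
By Dickson's lemma `f` has finitely many minimal exponents, and every exponent of `f` lies above
one of them. Two exponents `d, e` with `|d| ≤ |e|` become comparable after applying `T_j` for each
`j` with `e_j < d_j` in turn: each such step makes the `j`-th coordinate `|d| ≤ |e|` without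
disturbing the others, and keeps `|d| ≤ |e|`. Inserting the minimal exponents one at a time, some
sequence of substitutions makes one of them lie below all the others, hence below every exponent
of the transformed series, which is therefore a monomial times a series with nonzero constant term.
-/

open Finset MvPowerSeries

namespace SubstMulVar

variable {n : ℕ}

/-- `substMulVar j` sends the monomial `z ^ d` to `z ^ expImage j d`. -/
noncomputable def expImage (j : Fin n) (d : Fin n →₀ ℕ) : Fin n →₀ ℕ :=
  d.update j (∑ i, d i)

@[simp]
lemma expImage_apply_self (j : Fin n) (d : Fin n →₀ ℕ) : expImage j d j = ∑ i, d i := by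
  simp [expImage]

lemma expImage_apply_of_ne {j i : Fin n} (d : Fin n →₀ ℕ) (h : i ≠ j) :
    expImage j d i = d i := by
  simp [expImage, Finsupp.update_apply, h]

lemma sum_erase_expImage (j : Fin n) (d : Fin n →₀ ℕ) :
    ∑ i ∈ univ.erase j, expImage j d i = ∑ i ∈ univ.erase j, d i :=
  sum_congr rfl fun _ hi => expImage_apply_of_ne d (ne_of_mem_erase hi)

lemma monotone_expImage (j : Fin n) : Monotone (expImage j) := by
  intro d e h i
  rcases eq_or_ne i j with rfl | hi
  · simpa using sum_le_sum fun i _ => h i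
  · simpa [expImage_apply_of_ne _ hi] using h i

variable {k : Type*} [CommRing k]

lemma coeff_substMulVar_expImage (j : Fin n) (f : MvPowerSeries (Fin n) k) (d : Fin n →₀ ℕ) :
    coeff (expImage j d) (substMulVar j f) = coeff d f := by
  have hsum := sum_erase_add univ d (mem_univ j)
  rw [coeff_apply, substMulVar, sum_erase_expImage, expImage_apply_self,
    if_pos (by omega), show ∑ i, d i - ∑ i ∈ univ.erase j, d i = d j by omega, expImage,
    Finsupp.update_idem, Finsupp.update_self]

lemma exists_expImage_eq_of_coeff_substMulVar_ne_zero {j : Fin n} {f : MvPowerSeries (Fin n) k}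
    {e : Fin n →₀ ℕ} (h : coeff e (substMulVar j f) ≠ 0) :
    ∃ d, coeff d f ≠ 0 ∧ expImage j d = e := by
  rw [coeff_apply, substMulVar] at h
  split_ifs at h with hle
  · set d := e.update j (e j - ∑ i ∈ univ.erase j, e i)
    have hsum_erase : ∑ i ∈ univ.erase j, d i = ∑ i ∈ univ.erase j, e i :=
      sum_congr rfl fun i hi => by simp [d, Finsupp.update_apply, ne_of_mem_erase hi]
    have hsum : ∑ i, d i = e j := by
      rw [← sum_erase_add univ d (mem_univ j), hsum_erase]
      simp only [d, Finsupp.update_apply, if_pos]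
      omega
    refine ⟨d, h, ?_⟩
    rw [expImage, hsum, Finsupp.update_idem, Finsupp.update_self]
  · exact absurd rfl h

noncomputable def expImageList (l : List (Fin n)) (d : Fin n →₀ ℕ) : Fin n →₀ ℕ :=
  l.foldl (fun d j => expImage j d) d

lemma expImageList_append (l l' : List (Fin n)) (d : Fin n →₀ ℕ) :
    expImageList (l ++ l') d = expImageList l' (expImageList l d) :=
  List.foldl_append

lemma monotone_expImageList (l : List (Fin n)) : Monotone (expImageList l) := by
  induction l with
  | nil => exact monotone_id
  | cons j l ih => exact ih.comp (monotone_expImage j)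

lemma coeff_foldl_substMulVar_expImageList (l : List (Fin n)) (f : MvPowerSeries (Fin n) k)
    (d : Fin n →₀ ℕ) :
    coeff (expImageList l d) (l.foldl (fun h j => substMulVar j h) f) = coeff d f := by
  induction l generalizing f d with
  | nil => rfl
  | cons j l ih => exact (ih _ _).trans (coeff_substMulVar_expImage j f d)

lemma exists_expImageList_eq_of_coeff_foldl_substMulVar_ne_zero (l : List (Fin n))
    {f : MvPowerSeries (Fin n) k} {e : Fin n →₀ ℕ}
    (h : coeff e (l.foldl (fun h j => substMulVar j h) f) ≠ 0) :
    ∃ d, coeff d f ≠ 0 ∧ expImageList l d = e := by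
  induction l generalizing f with
  | nil => exact ⟨e, h, rfl⟩
  | cons j l ih =>
    obtain ⟨d', hd', rfl⟩ := ih h
    obtain ⟨d, hd, rfl⟩ := exists_expImage_eq_of_coeff_substMulVar_ne_zero hd'
    exact ⟨d, hd, rfl⟩

lemma exists_expImageList_le_of_sum_le (d e : Fin n →₀ ℕ) (h : ∑ i, d i ≤ ∑ i, e i) :
    ∃ l, expImageList l d ≤ expImageList l e := by
  by_cases hde : d ≤ e
  · exact ⟨[], hde⟩
  obtain ⟨j, hj⟩ : ∃ j, e j < d j := by simpa [Finsupp.le_def] using hde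
  have hd_split := sum_erase_add univ d (mem_univ j)
  have he_split := sum_erase_add univ e (mem_univ j)
  have hsum : ∑ i, expImage j d i ≤ ∑ i, expImage j e i := by
    rw [← sum_erase_add univ _ (mem_univ j), ← sum_erase_add univ (expImage j e) (mem_univ j),
      sum_erase_expImage, sum_erase_expImage, expImage_apply_self, expImage_apply_self]
    omega
  have hbad : univ.filter (fun i => expImage j e i < expImage j d i) ⊂
      univ.filter (fun i => e i < d i) := by
    refine (ssubset_iff_of_subset fun i hi => ?_).mpr ⟨j, by simpa using hj, by simpa using h⟩
    rcases eq_or_ne i j with rfl | hij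
    · simp only [mem_filter, mem_univ, expImage_apply_self, true_and] at hi
      omega
    · simpa [expImage_apply_of_ne _ hij] using hi
  obtain ⟨l, hl⟩ := exists_expImageList_le_of_sum_le (expImage j d) (expImage j e) hsum
  exact ⟨j :: l, hl⟩
termination_by (univ.filter (fun i => e i < d i)).card
decreasing_by exact card_lt_card hbad

lemma exists_expImageList_le_or_le (d e : Fin n →₀ ℕ) :
    ∃ l, expImageList l d ≤ expImageList l e ∨ expImageList l e ≤ expImageList l d := by
  rcases le_total (∑ i, d i) (∑ i, e i) with h | h
  · obtain ⟨l, hl⟩ := exists_expImageList_le_of_sum_le d e h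
    exact ⟨l, .inl hl⟩
  · obtain ⟨l, hl⟩ := exists_expImageList_le_of_sum_le e d h
    exact ⟨l, .inr hl⟩

lemma exists_expImageList_isLeast (s : Finset (Fin n →₀ ℕ)) (hs : s.Nonempty) :
    ∃ l, ∃ m ∈ s, ∀ x ∈ s, expImageList l m ≤ expImageList l x := by
  induction hs using Nonempty.cons_induction with
  | singleton a => exact ⟨[], a, mem_singleton_self a, by simp⟩
  | cons a s ha _ ih =>
    obtain ⟨l, m, hm, hmin⟩ := ih
    obtain ⟨l', hl'⟩ := exists_expImageList_le_or_le (expImageList l a) (expImageList l m)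
    simp only [← expImageList_append] at hl'
    have hmin' : ∀ x ∈ s, expImageList (l ++ l') m ≤ expImageList (l ++ l') x := fun x hx => by
      simpa only [expImageList_append] using monotone_expImageList l' (hmin x hx)
    refine ⟨l ++ l', ?_⟩
    rcases hl' with ham | hma
    · exact ⟨a, mem_cons_self a s,
        (forall_mem_cons ha _).mpr ⟨le_rfl, fun x hx => ham.trans (hmin' x hx)⟩⟩
    · exact ⟨m, mem_cons_of_mem hm, (forall_mem_cons ha _).mpr ⟨hma, hmin'⟩⟩

end SubstMulVar

namespace MvPowerSeries

variable {σ R : Type*} [CommSemiring R]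

lemma prod_X_pow_eq_monomial_one [Fintype σ] (a : σ →₀ ℕ) :
    ∏ i, (X i : MvPowerSeries σ R) ^ a i = monomial a 1 := by
  rw [monomial_one_eq, Finsupp.prod_fintype _ _ fun _ => pow_zero _]

lemma exists_eq_monomial_one_mul_of_forall_le {f : MvPowerSeries σ R} {a : σ →₀ ℕ}
    (hmin : ∀ e, coeff e f ≠ 0 → a ≤ e) :
    ∃ g, constantCoeff g = coeff a f ∧ f = monomial a 1 * g := by
  let g : MvPowerSeries σ R := fun e => coeff (e + a) f
  have coeff_g (e : σ →₀ ℕ) : coeff e g = coeff (e + a) f := rfl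
  refine ⟨g, by rw [← coeff_zero_eq_constantCoeff_apply, coeff_g, zero_add], ext fun e => ?_⟩
  rw [coeff_monomial_mul]
  split_ifs with hle
  · rw [one_mul, coeff_g, tsub_add_cancel_of_le hle]
  · by_contra hne
    exact hle (hmin e hne)

lemma finite_setOf_minimal_coeff_ne_zero [Finite σ] (f : MvPowerSeries σ R) :
    {d | Minimal (fun d => coeff d f ≠ 0) d}.Finite :=
  WellQuasiOrderedLE.finite_of_isAntichain (setOfPred_minimal_antichain _)

end MvPowerSeries

open SubstMulVar in
theorem monomialization_of_mvPowerSeries_general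
    {k : Type*} [Field k] {n : ℕ}
    (f : MvPowerSeries (Fin n) k) (hf : f ≠ 0) :
    ∃ (l : List (Fin n)) (a : Fin n → ℕ) (g : MvPowerSeries (Fin n) k),
      MvPowerSeries.constantCoeff g ≠ 0 ∧
      l.foldl (fun h j => substMulVar j h) f
        = (∏ i : Fin n, (MvPowerSeries.X i : MvPowerSeries (Fin n) k) ^ (a i)) * g := by
  have hM := finite_setOf_minimal_coeff_ne_zero f
  obtain ⟨d₀, hd₀⟩ := (ne_zero_iff_exists_coeff_ne_zero f).mp hf
  obtain ⟨m₀, -, hm₀⟩ := exists_minimal_le_of_wellFoundedLT (coeff · f ≠ 0) d₀ hd₀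
  obtain ⟨l, m, hmM, hm⟩ :=
    exists_expImageList_isLeast hM.toFinset ⟨m₀, hM.mem_toFinset.mpr hm₀⟩
  obtain ⟨g, hg, hfg⟩ := exists_eq_monomial_one_mul_of_forall_le
    (f := l.foldl (fun h j => substMulVar j h) f) (a := expImageList l m) fun e he => by
      obtain ⟨d, hd, rfl⟩ := exists_expImageList_eq_of_coeff_foldl_substMulVar_ne_zero l he
      obtain ⟨m', hm'd, hm'⟩ := exists_minimal_le_of_wellFoundedLT (coeff · f ≠ 0) d hd
      exact (hm m' (hM.mem_toFinset.mpr hm')).trans (monotone_expImageList l hm'd)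
  refine ⟨l, expImageList l m, g, ?_, by rwa [prod_X_pow_eq_monomial_one]⟩
  rw [hg, coeff_foldl_substMulVar_expImageList]
  exact (Set.mem_ofPred.mp (hM.mem_toFinset.mp hmM)).prop

/-- For every nonzero formal power series `f ∈ k⟦z₁,…,z_n⟧` there is a finite
sequence of substitutions `T_{j₁},…,T_{j_r}` (each `T_j : z_j ↦ z_j`, `z_i ↦ z_i z_j` for
`i ≠ j`) carrying `f` to a series of the form `z₁^{a₁} ⋯ z_n^{a_n} · g` with `g` having nonzero
constant term. -/
theorem monomialization_of_mvPowerSeries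
    {k : Type*} [Field k] {n : ℕ} (hn : 1 ≤ n)
    (f : MvPowerSeries (Fin n) k) (hf : f ≠ 0) :
    ∃ (l : List (Fin n)) (a : Fin n → ℕ) (g : MvPowerSeries (Fin n) k),
      MvPowerSeries.constantCoeff g ≠ 0 ∧
      l.foldl (fun h j => substMulVar j h) f
        = (∏ i : Fin n, (MvPowerSeries.X i : MvPowerSeries (Fin n) k) ^ (a i)) * g :=
  monomialization_of_mvPowerSeries_general f hf
end

section
/- Let q be a prime with q ≡ 1 (mod 4), and consider the integral binary quadratic form Q(x,y) = x² + xy + ((1−q)/4)·y² (of discriminant q), with polar form B((x₁,y₁),(x₂,y₂)) = Q(x₁+x₂, y₁+y₂) − Q(x₁,y₁) − Q(x₂,y₂). Let κ = (κ₁,κ₂) ∈ ℚ² be a primitive dual vector, i.e. B(κ,(1,0)) ∈ ℤ and B(κ,(0,1)) ∈ ℤ but κ ∉ ℤ², and let ℓ' be a prime different from 2. Then the following are equivalent: (i) Q(κ₁,κ₂) − ℓ'/q ∈ ℤ; (ii) for every prime ℓ there exist x, y ∈ ℚ_ℓ with x − κ₁ ∈ ℤ_ℓ, y − κ₂ ∈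 ℤ_ℓ, and x² + x·y + ((1−q)/4)·y² = ℓ'/q in ℚ_ℓ. -/
/-!
Let `b = (b₁, b₂) = (B(κ, e₁), B(κ, e₂)) ∈ ℤ²`. By polarization, for `v = (s, t)`,
`Q(κ + v) - ℓ'/q = Q(v) + b₁ s + b₂ t + (Q(κ) - ℓ'/q)`, so the local condition at `ℓ` asks for a
zero in `ℤ_ℓ²` of this inhomogeneous quadratic. If such zeros exist for all `ℓ`, the constant
`Q(κ) - ℓ'/q` is an `ℓ`-adic integer for every `ℓ`, hence an integer.

Conversely, if it is an integer the quadratic has integer coefficients, and by Hensel's lemma it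
suffices to find a zero mod `ℓ` at which the gradient does not vanish. For `ℓ = q` the form is
`(s + t/2)²` mod `q`, and on the line `t = -2s` the gradient is `b`, which is nonzero mod `q` because
`κ` is primitive. For `ℓ ≠ q` the substitution `(x, y) = q (κ + v)` reduces the problem to a nonzero
solution of `Q(x, y) = qℓ'` mod `ℓ`: at `ℓ = 2` take `(1, 0)`; at `ℓ = ℓ'` the form is isotropic
because `q` is a square mod `ℓ'` (quadratic reciprocity, since `ℓ' ≡ -((b₁ - 2b₂)/2)²` mod `q` and
`q ≡ 1` mod 4); otherwise the nondegenerate form `Q` represents every element of `𝔽_ℓ`.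
-/

open Polynomial

section PrincipalForm

variable {R : Type*} [CommRing R]

def principalForm (c x y : R) : R := x ^ 2 + x * y + c * y ^ 2

theorem mul_principalForm_eq {c q x y b₁ b₂ : R} (hq : 4 * c = 1 - q)
    (h₁ : 2 * x + y = b₁) (h₂ : x + 2 * c * y = b₂) :
    q * principalForm c x y = b₁ * b₂ - c * b₁ ^ 2 - b₂ ^ 2 := by
  subst h₁ h₂
  unfold principalForm
  linear_combination (x ^ 2 + x * y + c * y ^ 2) * hq

/-- The two disjuncts are the partial derivatives in `s` and `t`. -/
def IsNonsingularZero (c d e g s t : R) : Prop :=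
  principalForm c s t + d * s + e * t + g = 0 ∧ (2 * s + t + d ≠ 0 ∨ s + 2 * c * t + e ≠ 0)

theorem grad_principalForm_ne_zero [NoZeroDivisors R] {c x y : R} (hc : 1 - 4 * c ≠ 0)
    (hxy : x ≠ 0 ∨ y ≠ 0) : 2 * x + y ≠ 0 ∨ x + 2 * c * y ≠ 0 := by
  by_contra! h
  obtain ⟨h₁, h₂⟩ := h
  have hx : (1 - 4 * c) * x = 0 := by linear_combination h₂ - 2 * c * h₁
  have hy : (1 - 4 * c) * y = 0 := by linear_combination h₁ - 2 * h₂
  rcases hxy with hx' | hy'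
  · exact hx' ((mul_eq_zero.1 hx).resolve_left hc)
  · exact hy' ((mul_eq_zero.1 hy).resolve_left hc)

end PrincipalForm

namespace PadicInt

variable {p : ℕ} [Fact p.Prime]

theorem exists_quadratic_root {a b c x₀ : ℤ_[p]} (h : toZMod (a * x₀ ^ 2 + b * x₀ + c) = 0)
    (hd : toZMod (2 * a * x₀ + b) ≠ 0) : ∃ x, a * x ^ 2 + b * x + c = 0 := by
  set F : ℤ_[p][X] := C a * X ^ 2 + C b * X + C c
  have hF : ∀ x, F.aeval x = a * x ^ 2 + b * x + c := fun x => by simp [F]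
  have hF' : F.derivative.aeval x₀ = 2 * a * x₀ + b := by
    simp only [F, derivative_add, derivative_C_mul_X_pow, derivative_C_mul_X, derivative_C,
      coe_aeval_eq_eval, eval_add, eval_C, eval_mul, eval_pow, eval_X, eval_zero]
    ring
  have hsmall : ‖a * x₀ ^ 2 + b * x₀ + c‖ < 1 := by
    rw [← mem_nonunits, ← IsLocalRing.mem_maximalIdeal, ← ker_toZMod]
    exact h
  have hunit : ‖2 * a * x₀ + b‖ = 1 := isUnit_iff.1 <| by
    by_contra hnu
    exact hd (by rwa [← RingHom.mem_ker, ker_toZMod])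
  obtain ⟨x, hx, -⟩ := hensels_lemma (F := F) (a := x₀) (by rw [hF, hF', hunit]; simpa)
  exact ⟨x, by rwa [hF] at hx⟩

theorem exists_zero_of_isNonsingularZero {c d e g : ℤ} {σ τ : ZMod p}
    (h : IsNonsingularZero (c : ZMod p) d e g σ τ) :
    ∃ s t : ℤ_[p], principalForm (c : ℤ_[p]) s t + d * s + e * t + g = 0 := by
  obtain ⟨s₀, rfl⟩ : ∃ s₀ : ℤ_[p], toZMod s₀ = σ :=
    ⟨(σ.cast : ℤ), by rw [map_intCast, ZMod.intCast_cast, ZMod.cast_id]⟩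
  obtain ⟨t₀, rfl⟩ : ∃ t₀ : ℤ_[p], toZMod t₀ = τ :=
    ⟨(τ.cast : ℤ), by rw [map_intCast, ZMod.intCast_cast, ZMod.cast_id]⟩
  obtain ⟨hzero, hgrad⟩ := h
  unfold principalForm at hzero ⊢
  rcases hgrad with hs | ht
  · obtain ⟨s, hs⟩ := exists_quadratic_root (a := 1) (b := t₀ + (d : ℤ_[p]))
      (c := (c : ℤ_[p]) * t₀ ^ 2 + (e : ℤ_[p]) * t₀ + (g : ℤ_[p])) (x₀ := s₀)
      (by simp only [map_add, map_mul, map_pow, map_one, map_intCast]; linear_combination hzero)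
      (by simp only [map_add, map_mul, map_one, map_ofNat, map_intCast]; convert hs using 1; ring)
    exact ⟨s, t₀, by linear_combination hs⟩
  · obtain ⟨t, ht⟩ := exists_quadratic_root (a := c) (b := s₀ + (e : ℤ_[p]))
      (c := s₀ ^ 2 + (d : ℤ_[p]) * s₀ + (g : ℤ_[p])) (x₀ := t₀)
      (by simp only [map_add, map_mul, map_pow, map_intCast]; linear_combination hzero)
      (by simp only [map_add, map_mul, map_intCast, map_ofNat]; convert ht using 1; ring)
    exact ⟨s₀, t, by linear_combination ht⟩

end PadicInt

section Field

variable {K : Type*} [Field K]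

theorem exists_isNonsingularZero_of_four_mul_eq_one {c d e : K} (hc : 4 * c = 1)
    (hde : d - 2 * e ≠ 0) (g : K) : ∃ s t, IsNonsingularZero c d e g s t := by
  refine ⟨-g / (d - 2 * e), -2 * (-g / (d - 2 * e)), ?_, ?_⟩
  · unfold principalForm
    field_simp
    linear_combination g ^ 2 * hc
  · by_contra! h
    apply hde
    linear_combination h.1 - 2 * h.2 + (2 * g / (d - 2 * e)) * hc

/-- The zero is `(x, y) / q - κ`, where `κ = (b₂ - 2cb₁, b₁ - 2b₂) / q` is the vector whose polar
vector `(2κ₁ + κ₂, κ₁ + 2cκ₂)` is `(b₁, b₂)`. -/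
theorem isNonsingularZero_of_principalForm_eq {c q b₁ b₂ z w x y : K} (hc : 4 * c = 1 - q)
    (hq : q ≠ 0) (hz : q * z + w = b₁ * b₂ - c * b₁ ^ 2 - b₂ ^ 2) (hxy : x ≠ 0 ∨ y ≠ 0)
    (h : principalForm c x y = q * w) :
    IsNonsingularZero c b₁ b₂ z ((x - (b₂ - 2 * c * b₁)) / q) ((y - (b₁ - 2 * b₂)) / q) := by
  set σ := (x - (b₂ - 2 * c * b₁)) / q with hσ
  set τ := (y - (b₁ - 2 * b₂)) / q with hτ
  have hx : x = q * σ + (b₂ - 2 * c * b₁) := by rw [hσ]; field_simp; ring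
  have hy : y = q * τ + (b₁ - 2 * b₂) := by rw [hτ]; field_simp; ring
  clear_value σ τ
  subst hx hy
  obtain rfl : q = 1 - 4 * c := by linear_combination hc
  have hgrad := grad_principalForm_ne_zero hq hxy
  refine ⟨mul_left_cancel₀ (pow_ne_zero 2 hq) ?_, ?_⟩
  · unfold principalForm at h ⊢
    linear_combination h + (1 - 4 * c) * hz
  · refine hgrad.imp (fun h₁ h₁' => h₁ ?_) (fun h₂ h₂' => h₂ ?_)
    · linear_combination (1 - 4 * c) * h₁'
    · linear_combination (1 - 4 * c) * h₂'

theorem principalForm_eq_zero_of_sq_eq {c r : K} (h2 : (2 : K) ≠ 0) (hr : r ^ 2 = 1 - 4 * c) :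
    principalForm c ((r - 1) / 2) 1 = 0 := by
  unfold principalForm
  field_simp
  linear_combination hr

/-- `4 Q(x, y) = (2x + y)² - (1 - 4c) y²`, and `a² - D b²` takes every value for `D ≠ 0`. -/
theorem FiniteField.exists_principalForm_eq [Fintype K] (hK : ringChar K ≠ 2) {c : K}
    (hc : 1 - 4 * c ≠ 0) (w : K) : ∃ x y, principalForm c x y = w := by
  obtain ⟨a, b, hab⟩ := FiniteField.exists_root_sum_quadratic
    (f := X ^ 2 - C (4 * w)) (g := -(C (1 - 4 * c) * X ^ 2))
    (degree_X_pow_sub_C two_pos _) (by rw [degree_neg, degree_C_mul_X_pow 2 hc]; rfl)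
    (FiniteField.odd_card_of_char_ne_two hK)
  have h2 : (2 : K) ≠ 0 := Ring.two_ne_zero hK
  refine ⟨(a - b) / 2, b, ?_⟩
  simp only [eval_sub, eval_neg, eval_mul, eval_pow, eval_C, eval_X] at hab
  unfold principalForm
  field_simp
  linear_combination hab

end Field

section ZMod

variable {q ℓ' : ℕ} {c b₁ b₂ z : ℤ}

theorem isSquare_natCast_zmod [Fact q.Prime] [Fact ℓ'.Prime] (hq4 : q % 4 = 1) (hℓ'2 : ℓ' ≠ 2)
    (hc : 4 * c = 1 - q) (hz : q * z + ℓ' = b₁ * b₂ - c * b₁ ^ 2 - b₂ ^ 2) :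
    IsSquare (q : ZMod ℓ') := by
  rw [← ZMod.exists_sq_eq_prime_iff_of_mod_four_eq_one hq4 hℓ'2]
  have h2 : (2 : ZMod q) ≠ 0 := Ring.two_ne_zero (by rw [ZMod.ringChar_zmod_n]; omega)
  obtain ⟨i, hi⟩ := ZMod.exists_sq_eq_neg_one_iff.2 (by omega : q % 4 ≠ 3)
  have hc' : 4 * (c : ZMod q) = 1 := by
    simpa using congrArg (Int.cast : ℤ → ZMod q) hc
  have hz' : (ℓ' : ZMod q) = b₁ * b₂ - c * b₁ ^ 2 - b₂ ^ 2 := by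
    simpa using congrArg (Int.cast : ℤ → ZMod q) hz
  refine ⟨i * (b₁ - 2 * b₂) / 2, ?_⟩
  rw [hz']
  field_simp
  linear_combination (-(b₁ : ZMod q) ^ 2) * hc' + ((b₁ : ZMod q) - 2 * b₂) ^ 2 * hi

theorem exists_principalForm_eq_mul [Fact q.Prime] [Fact ℓ'.Prime] (hq4 : q % 4 = 1)
    (hℓ'2 : ℓ' ≠ 2) (hc : 4 * c = 1 - q) (hz : q * z + ℓ' = b₁ * b₂ - c * b₁ ^ 2 - b₂ ^ 2)
    {ℓ : ℕ} [Fact ℓ.Prime] (hℓq : ℓ ≠ q) :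
    ∃ x y : ZMod ℓ, (x ≠ 0 ∨ y ≠ 0) ∧ principalForm (c : ZMod ℓ) x y = q * ℓ' := by
  have hcℓ : 1 - 4 * (c : ZMod ℓ) = q := by
    have h := congrArg (Int.cast : ℤ → ZMod ℓ) hc
    push_cast at h
    linear_combination -h
  by_cases hℓ2 : ℓ = 2
  · subst hℓ2
    refine ⟨1, 0, Or.inl one_ne_zero, ?_⟩
    rw [(Nat.Prime.odd_of_ne_two Fact.out (by omega)).natCast_zmod_two,
      (Nat.Prime.odd_of_ne_two Fact.out hℓ'2).natCast_zmod_two]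
    simp [principalForm]
  have hcharℓ : ringChar (ZMod ℓ) ≠ 2 := by rwa [ZMod.ringChar_zmod_n]
  by_cases hℓℓ' : ℓ = ℓ'
  · subst hℓℓ'
    obtain ⟨r, hr⟩ := isSquare_natCast_zmod (ℓ' := ℓ) hq4 hℓ'2 hc hz
    refine ⟨(r - 1) / 2, 1, Or.inr one_ne_zero, ?_⟩
    rw [ZMod.natCast_self, mul_zero]
    exact principalForm_eq_zero_of_sq_eq (Ring.two_ne_zero hcharℓ) (by rw [hcℓ, hr, sq])
  · have hw : (q * ℓ' : ZMod ℓ) ≠ 0 :=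
      mul_ne_zero (ZMod.prime_ne_zero ℓ q hℓq) (ZMod.prime_ne_zero ℓ ℓ' hℓℓ')
    obtain ⟨x, y, h⟩ := FiniteField.exists_principalForm_eq hcharℓ
      (hcℓ ▸ ZMod.prime_ne_zero ℓ q hℓq) (q * ℓ' : ZMod ℓ)
    refine ⟨x, y, ?_, h⟩
    contrapose! hw
    simp [← h, hw.1, hw.2, principalForm]

theorem exists_isNonsingularZero_zmod [Fact q.Prime] [Fact ℓ'.Prime] (hq4 : q % 4 = 1)
    (hℓ'2 : ℓ' ≠ 2) (hc : 4 * c = 1 - q) (hz : q * z + ℓ' = b₁ * b₂ - c * b₁ ^ 2 - b₂ ^ 2)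
    (hprim : ¬ (q : ℤ) ∣ b₁ - 2 * b₂) (ℓ : ℕ) [Fact ℓ.Prime] :
    ∃ σ τ : ZMod ℓ, IsNonsingularZero (c : ZMod ℓ) b₁ b₂ z σ τ := by
  have hcℓ : 4 * (c : ZMod ℓ) = 1 - q := by simpa using congrArg (Int.cast : ℤ → ZMod ℓ) hc
  by_cases hℓq : ℓ = q
  · subst hℓq
    refine exists_isNonsingularZero_of_four_mul_eq_one (by simpa using hcℓ) ?_ _
    rwa [Ne, ← Int.cast_ofNat, ← Int.cast_mul, ← Int.cast_sub, ZMod.intCast_zmod_eq_zero_iff_dvd]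
  · obtain ⟨x, y, hxy, h⟩ := exists_principalForm_eq_mul hq4 hℓ'2 hc hz hℓq
    exact ⟨_, _, isNonsingularZero_of_principalForm_eq hcℓ (ZMod.prime_ne_zero ℓ q hℓq)
      (by simpa using congrArg (Int.cast : ℤ → ZMod ℓ) hz) hxy h⟩

end ZMod

section PolarVector

variable {q : ℕ} {c b₁ b₂ : ℤ} {κ₁ κ₂ : ℚ}

theorem exists_eq_intCast_of_dvd (hq : q ≠ 0) (hc : 4 * c = 1 - q) (h₁ : 2 * κ₁ + κ₂ = b₁)
    (h₂ : κ₁ + 2 * c * κ₂ = b₂) (hdvd : (q : ℤ) ∣ b₁ - 2 * b₂) :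
    ∃ z₁ z₂ : ℤ, κ₁ = z₁ ∧ κ₂ = z₂ := by
  obtain ⟨m, hm⟩ := hdvd
  have hcQ : 4 * (c : ℚ) = 1 - q := by exact_mod_cast hc
  have hmQ : (b₁ - 2 * b₂ : ℚ) = q * m := by exact_mod_cast hm
  have hκ₂ : κ₂ = m := mul_left_cancel₀ (Nat.cast_ne_zero.2 hq) <| by
    linear_combination κ₂ * hcQ + h₁ - 2 * h₂ + hmQ
  exact ⟨b₂ - 2 * c * m, m, by push_cast; linear_combination h₂ - 2 * c * hκ₂, hκ₂⟩

theorem mul_add_eq_of_principalForm_sub_eq {ℓ' : ℕ} {z : ℤ} (hq : q ≠ 0) (hc : 4 * c = 1 - q)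
    (h₁ : 2 * κ₁ + κ₂ = b₁) (h₂ : κ₁ + 2 * c * κ₂ = b₂)
    (hz : principalForm (c : ℚ) κ₁ κ₂ - ℓ' / q = z) :
    q * z + ℓ' = b₁ * b₂ - c * b₁ ^ 2 - b₂ ^ 2 := by
  have hzQ : (q : ℚ) * z + ℓ' = b₁ * b₂ - c * b₁ ^ 2 - b₂ ^ 2 := by
    rw [← hz, ← mul_principalForm_eq (q := (q : ℚ)) (by exact_mod_cast hc) h₁ h₂]
    field_simp
    ring
  exact_mod_cast hzQ

end PolarVector

theorem Rat.den_eq_one_of_forall_padic_norm_le_one {r : ℚ}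
    (h : ∀ (p : ℕ) [Fact p.Prime], ‖(r : ℚ_[p])‖ ≤ 1) : r.den = 1 := by
  by_contra hden
  obtain ⟨p, hp, hpden⟩ := Nat.exists_prime_and_dvd hden
  have := Fact.mk hp
  have hpnum : ¬ (p : ℤ) ∣ r.num := fun hpnum =>
    Nat.Prime.not_coprime_iff_dvd.2 ⟨p, hp, Int.natCast_dvd.1 hpnum, hpden⟩ r.reduced
  have hnum : ‖(r.num : ℚ_[p])‖ = 1 :=
    (Padic.norm_int_le_one _).antisymm (not_lt.1 (mt Padic.norm_intCast_lt_one_iff.1 hpnum))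
  have hden' : ‖(r.den : ℚ_[p])‖ < 1 := Padic.norm_natCast_lt_one_iff.2 hpden
  have hcast : (r.num : ℚ_[p]) = (r : ℚ_[p]) * r.den := by
    exact_mod_cast (Rat.mul_den_eq_num r).symm
  rw [hcast, norm_mul] at hnum
  nlinarith [h p, norm_nonneg (r.den : ℚ_[p])]

namespace Padic

variable {p : ℕ} [Fact p.Prime]

theorem exists_norm_sub_le_one_iff {κ₁ κ₂ : ℚ_[p]} {P : ℚ_[p] → ℚ_[p] → Prop} :
    (∃ x y, ‖x - κ₁‖ ≤ 1 ∧ ‖y - κ₂‖ ≤ 1 ∧ P x y) ↔ ∃ s t : ℤ_[p], P (κ₁ + s) (κ₂ + t) := by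
  constructor
  · rintro ⟨x, y, hx, hy, h⟩
    exact ⟨⟨x - κ₁, hx⟩, ⟨y - κ₂, hy⟩, by simpa using h⟩
  · rintro ⟨s, t, h⟩
    exact ⟨_, _, by simpa using s.2, by simpa using t.2, h⟩

theorem exists_principalForm_coset_eq_iff {c b₁ b₂ : ℤ} {κ₁ κ₂ w : ℚ_[p]}
    (h₁ : 2 * κ₁ + κ₂ = b₁) (h₂ : κ₁ + 2 * c * κ₂ = b₂) :
    (∃ x y, ‖x - κ₁‖ ≤ 1 ∧ ‖y - κ₂‖ ≤ 1 ∧ x ^ 2 + x * y + c * y ^ 2 = w) ↔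
      ∃ s t : ℤ_[p], ((principalForm (c : ℤ_[p]) s t + b₁ * s + b₂ * t : ℤ_[p]) : ℚ_[p]) =
        w - principalForm (c : ℚ_[p]) κ₁ κ₂ := by
  rw [exists_norm_sub_le_one_iff]
  refine exists₂_congr fun s t => ?_
  push_cast [principalForm]
  constructor <;> intro h
  · linear_combination h - (s : ℚ_[p]) * h₁ - (t : ℚ_[p]) * h₂
  · linear_combination h + (s : ℚ_[p]) * h₁ + (t : ℚ_[p]) * h₂

end Padic

/-- Let `q ≡ 1 (mod 4)` be a prime, `Q(x,y) = x² + xy + ((1-q)/4)y²` the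
principal binary form of discriminant `q` (so `c = (1-q)/4 ∈ ℤ`), with polar form `B`.
Let `κ = (κ₁,κ₂)` be a primitive dual vector (`B(κ,e) ∈ ℤ` for the standard basis vectors `e`,
but `κ ∉ ℤ²`) and `ℓ'` a prime different from `2`.  Then `Q(κ₁,κ₂) ≡ ℓ'/q (mod ℤ)` iff the
coset `κ + ℤ̂²` represents `ℓ'/q` everywhere locally, i.e. for every prime `ℓ` there are
`x, y ∈ ℚ_ℓ` congruent to `κ₁, κ₂` modulo `ℤ_ℓ` with `x² + xy + ((1-q)/4)y² = ℓ'/q`. -/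
theorem primitive_coset_represents_iff_congruence
    (q : ℕ) (hq : q.Prime) (hq4 : q % 4 = 1)
    (c : ℤ) (hc : (4 : ℤ) * c = 1 - (q : ℤ))
    (Qf : ℚ → ℚ → ℚ) (hQf : ∀ x y : ℚ, Qf x y = x ^ 2 + x * y + (c : ℚ) * y ^ 2)
    (Bf : ℚ → ℚ → ℚ → ℚ → ℚ)
    (hBf : ∀ x₁ y₁ x₂ y₂ : ℚ,
      Bf x₁ y₁ x₂ y₂ = Qf (x₁ + x₂) (y₁ + y₂) - Qf x₁ y₁ - Qf x₂ y₂)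
    (κ₁ κ₂ : ℚ)
    (hdual₁ : ∃ z : ℤ, Bf κ₁ κ₂ 1 0 = (z : ℚ))
    (hdual₂ : ∃ z : ℤ, Bf κ₁ κ₂ 0 1 = (z : ℚ))
    (hprim : ¬ ∃ z₁ z₂ : ℤ, κ₁ = (z₁ : ℚ) ∧ κ₂ = (z₂ : ℚ))
    (ℓ' : ℕ) (hℓ' : ℓ'.Prime) (hℓ'2 : ℓ' ≠ 2) :
    (∃ z : ℤ, Qf κ₁ κ₂ - (ℓ' : ℚ) / (q : ℚ) = (z : ℚ)) ↔
      (∀ (ℓ : ℕ) [Fact ℓ.Prime], ∃ x y : ℚ_[ℓ],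
        ‖x - (κ₁ : ℚ_[ℓ])‖ ≤ 1 ∧ ‖y - (κ₂ : ℚ_[ℓ])‖ ≤ 1 ∧
        x ^ 2 + x * y + (c : ℚ_[ℓ]) * y ^ 2 = (ℓ' : ℚ_[ℓ]) / (q : ℚ_[ℓ])) := by
  have := Fact.mk hq
  have := Fact.mk hℓ'
  obtain ⟨b₁, hb₁⟩ := hdual₁
  obtain ⟨b₂, hb₂⟩ := hdual₂
  simp only [hBf, hQf] at hb₁ hb₂
  have h₁ : 2 * κ₁ + κ₂ = b₁ := by linear_combination hb₁
  have h₂ : κ₁ + 2 * c * κ₂ = b₂ := by linear_combination hb₂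
  set r := Qf κ₁ κ₂ - (ℓ' : ℚ) / (q : ℚ)
  have hlocal (ℓ : ℕ) [Fact ℓ.Prime] := Padic.exists_principalForm_coset_eq_iff (p := ℓ)
    (κ₁ := κ₁) (κ₂ := κ₂) (w := (ℓ' : ℚ_[ℓ]) / (q : ℚ_[ℓ]))
    (by exact_mod_cast h₁) (by exact_mod_cast h₂)
  have hr (ℓ : ℕ) [Fact ℓ.Prime] :
      (ℓ' : ℚ_[ℓ]) / (q : ℚ_[ℓ]) - principalForm (c : ℚ_[ℓ]) κ₁ κ₂ = -(r : ℚ_[ℓ]) := by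
    simp only [r, hQf, principalForm]; push_cast; ring
  simp only [hlocal, hr]
  constructor
  · rintro ⟨z, hz⟩ ℓ _
    have hzZ := mul_add_eq_of_principalForm_sub_eq hq.ne_zero hc h₁ h₂
      (by simp only [r, hQf] at hz; exact hz)
    have hprim' : ¬ (q : ℤ) ∣ b₁ - 2 * b₂ :=
      fun hdvd => hprim (exists_eq_intCast_of_dvd hq.ne_zero hc h₁ h₂ hdvd)
    obtain ⟨σ, τ, hστ⟩ := exists_isNonsingularZero_zmod hq4 hℓ'2 hc hzZ hprim' ℓ
    obtain ⟨s, t, hst⟩ := PadicInt.exists_zero_of_isNonsingularZero hστ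
    refine ⟨s, t, ?_⟩
    rw [hz, eq_neg_iff_add_eq_zero]
    exact_mod_cast congrArg ((↑) : ℤ_[ℓ] → ℚ_[ℓ]) hst
  · intro h
    refine ⟨r.num, (Rat.coe_int_num_of_den_eq_one <|
      Rat.den_eq_one_of_forall_padic_norm_le_one fun ℓ _ => ?_).symm⟩
    obtain ⟨s, t, hst⟩ := h ℓ
    rw [← norm_neg, ← hst]
    exact PadicInt.norm_le_one _
end
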